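/- arXiv:2208.11166 — 3 statements merged into one kernel-verified Lean document; each statement's English description precedes it below -/
import Mathlib

section
/- Let η : ℝ² → ℝ be smooth and compactly supported and φ : ℝ² → ℝ² smooth. Define Φ[φ](x) = η(x) φ(x) + ∇⊥η(x) (x⊥ · φ(x)) and Φ⁰[φ](x) = (1 - η(x)) φ(0) - ∇⊥η(x) (x⊥ · φ(0)). Then div(Φ[φ]) - η div(φ) = ∇η · (φ - φ(0)) + (∇⊥η ⊗ (φ - φ(0))) : ∇x⊥ + (∇⊥η ⊗ x⊥) : ∇φ, where A : B = Σᵢⱼ AᵢⱼBᵢⱼ. -/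
/-- Partial derivative in direction `i` of a scalar function on ℝ². -/
noncomputable def pd (i : Fin 2) (f : (Fin 2 → ℝ) → ℝ) (x : Fin 2 → ℝ) : ℝ :=
  fderiv ℝ f x (Pi.single i 1)

/-- The rotation `x⊥ = (-x₂, x₁)`. -/
def xperp (x : Fin 2 → ℝ) : Fin 2 → ℝ := ![-(x 1), x 0]

/-- The perpendicular gradient `∇⊥η = (-∂₂η, ∂₁η)`. -/
noncomputable def perpGrad (η : (Fin 2 → ℝ) → ℝ) (x : Fin 2 → ℝ) : Fin 2 → ℝ :=
  ![-(pd 1 η x), pd 0 η x]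

section Aux

variable {f g : (Fin 2 → ℝ) → ℝ} {x : Fin 2 → ℝ} {i j : Fin 2}

lemma pd_add (hf : DifferentiableAt ℝ f x) (hg : DifferentiableAt ℝ g x) :
    pd i (fun y => f y + g y) x = pd i f x + pd i g x := by
  simp [pd, fderiv_fun_add hf hg]

lemma pd_mul (hf : DifferentiableAt ℝ f x) (hg : DifferentiableAt ℝ g x) :
    pd i (fun y => f y * g y) x = pd i f x * g x + f x * pd i g x := by
  simp [pd, fderiv_fun_mul hf hg]
  ring

lemma pd_neg : pd i (fun y => -(f y)) x = -(pd i f x) := by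
  simp [pd, fderiv_neg]

lemma pd_coord : pd i (fun y : Fin 2 → ℝ => y j) x = if j = i then 1 else 0 := by
  have : fderiv ℝ (fun y : Fin 2 → ℝ => y j) x = ContinuousLinearMap.proj j := by
    exact (ContinuousLinearMap.proj j : (Fin 2 → ℝ) →L[ℝ] ℝ).fderiv
  simp [pd, this, Pi.single_apply]

lemma pd_const (c : ℝ) : pd i (fun _ => c) x = 0 := by
  simp [pd]

end Aux

/-- with `Φ[φ] = η φ + ∇⊥η (x⊥ · φ)` one has
`div(Φ[φ]) - η div(φ) = ∇η · (φ - φ(0)) + (∇⊥η ⊗ (φ - φ(0))) : ∇x⊥ + (∇⊥η ⊗ x⊥) : ∇φ`. -/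
theorem stmt1 (η : (Fin 2 → ℝ) → ℝ) (hη : ContDiff ℝ (⊤ : ℕ∞) η)
    (hsupp : HasCompactSupport η)
    (φ : (Fin 2 → ℝ) → Fin 2 → ℝ) (hφ : ContDiff ℝ (⊤ : ℕ∞) φ)
    (Φ : (Fin 2 → ℝ) → Fin 2 → ℝ)
    (hΦ : ∀ x i, Φ x i = η x * φ x i +
      perpGrad η x i * (∑ j, xperp x j * φ x j)) :
    ∀ x,
      (pd 0 (fun y => Φ y 0) x + pd 1 (fun y => Φ y 1) x)
        - η x * (pd 0 (fun y => φ y 0) x + pd 1 (fun y => φ y 1) x)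
      = (∑ i, pd i η x * (φ x i - φ 0 i))
        + (∑ i, ∑ j, perpGrad η x i * (φ x j - φ 0 j) * pd i (fun y => xperp y j) x)
        + (∑ i, ∑ j, perpGrad η x i * xperp x j * pd i (fun y => φ y j) x) := by
  intro x
  have hdη : Differentiable ℝ η := hη.differentiable (by simp)
  have hdφ : ∀ j, Differentiable ℝ (fun y => φ y j) := fun j =>
    (contDiff_pi.mp hφ j).differentiable (by simp)
  have hdf : Differentiable ℝ (fderiv ℝ η) :=
    (hη.fderiv_right (m := 1) (by exact WithTop.coe_le_coe.mpr le_top)).differentiable (by simp)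
  have hdp : ∀ j : Fin 2, Differentiable ℝ (fun y => pd j η y) := fun j =>
    hdf.clm_apply (differentiable_const _)
  have hΦ0 : (fun y => Φ y 0) =
      fun y => η y * φ y 0 + (-(pd 1 η y)) * ((-(y 1)) * φ y 0 + y 0 * φ y 1) := by
    funext y
    simp [hΦ, perpGrad, xperp, Fin.sum_univ_two]
  have hΦ1 : (fun y => Φ y 1) =
      fun y => η y * φ y 1 + (pd 0 η y) * ((-(y 1)) * φ y 0 + y 0 * φ y 1) := by
    funext y
    simp [hΦ, perpGrad, xperp, Fin.sum_univ_two]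
  have hsymm : pd 0 (fun y => pd 1 η y) x = pd 1 (fun y => pd 0 η y) x := by
    have h2 : ∀ i j : Fin 2, pd i (fun y => pd j η y) x
        = fderiv ℝ (fderiv ℝ η) x (Pi.single i 1) (Pi.single j 1) := by
      intro i j
      have := fderiv_clm_apply (c := fderiv ℝ η) (u := fun _ => Pi.single j (1:ℝ))
        (hdf x) (differentiableAt_const _)
      simp [pd, this]
    rw [h2, h2]
    exact second_derivative_symmetric (fun y => (hdη y).hasFDerivAt)
      (hdf x).hasFDerivAt _ _
  rw [hΦ0, hΦ1]
  simp only [perpGrad, xperp, Fin.sum_univ_two, Matrix.cons_val_zero, Matrix.cons_val_one,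
    Matrix.head_cons]
  rw [pd_add (by fun_prop) (by fun_prop), pd_add (by fun_prop) (by fun_prop),
    pd_mul (by fun_prop) (by fun_prop), pd_mul (by fun_prop) (by fun_prop),
    pd_mul (by fun_prop) (by fun_prop), pd_mul (by fun_prop) (by fun_prop),
    pd_add (by fun_prop) (by fun_prop), pd_add (by fun_prop) (by fun_prop),
    pd_mul (by fun_prop) (by fun_prop), pd_mul (by fun_prop) (by fun_prop),
    pd_mul (by fun_prop) (by fun_prop), pd_mul (by fun_prop) (by fun_prop),
    pd_neg, pd_neg, pd_neg]
  simp only [pd_coord, pd_neg, pd_const]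
  norm_num
  linear_combination (x 1 * φ x 0 - x 0 * φ x 1) * hsymm
end

section
/- Let ε_n → 0⁺ and α_n → +∞ with α_n ≤ |log ε_n|, and let η̃_n(x) = f_{ε_n, ε_n α_n}(|x|) be the logarithmic cut-offs on ℝ². Then for every q with 2 < q < ∞, ε_n α_n · ‖∇η̃_n‖_{L^q(ℝ²)} → 0 as n → ∞. -/
/-! The gradient of `η̃` vanishes off the annulus `ε ≤ |x| ≤ εα` and has size `1 / (|x| log α)`
on it, so integrating in polar coordinates gives `‖∇η̃‖_q^q ≤ C ε^(2-q) / (log α)^q` for `q > 2`.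
Hence `εα ‖∇η̃‖_q ≤ C^(1/q) (α / log α) ε^(2/q) ≤ C^(1/q) |log ε| ε^(2/q)` once `α ≥ e`, and
`|log ε| ε^(2/q) → 0` as `ε → 0⁺`. -/

open MeasureTheory Filter

/-- The radial logarithmic cut-off profile `f_{A,B}`. -/
noncomputable def fAB (A B : ℝ) (z : ℝ) : ℝ :=
  if z < A then 1
  else if z ≤ B then (Real.log z - Real.log B) / (Real.log A - Real.log B)
  else 0

/-- The logarithmic cut-off `η̃(x) = f_{ε, εα}(|x|)` on ℝ². -/
noncomputable def etaTilde (ε α : ℝ) (x : EuclideanSpace ℝ (Fin 2)) : ℝ :=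
  fAB ε (ε * α) ‖x‖

open Set Metric Real Topology Module

section RadialProfile

variable {A B r : ℝ}

lemma fAB_eventuallyEq_one (hr : r < A) : fAB A B =ᶠ[𝓝 r] fun _ => 1 := by
  filter_upwards [Iio_mem_nhds hr] with z hz
  simp [fAB, mem_Iio.1 hz]

lemma hasDerivAt_fAB_of_mem_Ioo (hA : 0 < A) (hr : r ∈ Ioo A B) :
    HasDerivAt (fAB A B) (r⁻¹ / (log A - log B)) r := by
  refine (((hasDerivAt_log (hA.trans hr.1).ne').sub_const (log B)).div_const
    (log A - log B)).congr_of_eventuallyEq ?_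
  filter_upwards [Ioo_mem_nhds hr.1 hr.2] with z hz
  simp [fAB, not_lt.2 hz.1.le, hz.2.le]

lemma hasDerivAt_fAB_of_gt (hAB : A ≤ B) (hr : B < r) : HasDerivAt (fAB A B) 0 r := by
  refine (hasDerivAt_const r (0 : ℝ)).congr_of_eventuallyEq ?_
  filter_upwards [Ioi_mem_nhds hr] with z hz
  simp [fAB, not_lt.2 (hAB.trans (mem_Ioi.1 hz).le), not_le.2 (mem_Ioi.1 hz)]

lemma integral_Ioo_pow_mul_inv_div_rpow {A B L q : ℝ} {d : ℕ} (hd : 1 ≤ d) (hA : 0 < A)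
    (hAB : A ≤ B) (hL : 0 ≤ L) (hqd : q ≠ d) :
    ∫ r in Ioo A B, r ^ (d - 1) * (r⁻¹ / L) ^ q
      = (B ^ ((d : ℝ) - q) - A ^ ((d : ℝ) - q)) / (d - q) / L ^ q := by
  have hpt : ∀ r ∈ Ioo A B, r ^ (d - 1) * (r⁻¹ / L) ^ q = r ^ ((d : ℝ) - q - 1) / L ^ q := by
    intro r hr
    have hr0 : 0 < r := hA.trans hr.1
    rw [div_rpow (inv_nonneg.2 hr0.le) hL, inv_rpow hr0.le, ← rpow_neg hr0.le, ← rpow_natCast,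
      Nat.cast_sub hd, Nat.cast_one, mul_div_assoc', ← rpow_add hr0]
    ring_nf
  have hexp : (d : ℝ) - q - 1 ≠ -1 := fun h => hqd (by linarith)
  have h0 : (0 : ℝ) ∉ uIcc A B := by
    rw [uIcc_of_le hAB]; exact fun h => hA.not_ge h.1
  rw [setIntegral_congr_fun measurableSet_Ioo hpt, integral_div, ← integral_Ioc_eq_integral_Ioo,
    ← intervalIntegral.integral_of_le hAB, integral_rpow (Or.inr ⟨hexp, h0⟩), sub_add_cancel]

end RadialProfile

section RadialFunction

variable {E : Type*} [NormedAddCommGroup E] [InnerProductSpace ℝ E]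

lemma norm_fderiv_comp_norm {f : ℝ → ℝ} {f' : ℝ} {x : E} (hx : x ≠ 0)
    (hf : HasDerivAt f f' ‖x‖) : ‖fderiv ℝ (fun y => f ‖y‖) x‖ = |f'| := by
  have : Nontrivial E := nontrivial_of_ne x 0 hx
  have hnorm : DifferentiableAt ℝ (‖·‖) x := differentiableAt_id.norm ℝ hx
  have hcomp : HasFDerivAt (fun y => f ‖y‖) (f' • fderiv ℝ (‖·‖) x) x :=
    hf.comp_hasFDerivAt x hnorm.hasFDerivAt
  rw [hcomp.fderiv, norm_smul, norm_fderiv_norm hnorm, mul_one, Real.norm_eq_abs]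

lemma norm_fderiv_fAB_norm {A B : ℝ} (hA : 0 < A) (hAB : A ≤ B) {x : E} (hxA : ‖x‖ ≠ A)
    (hxB : ‖x‖ ≠ B) :
    ‖fderiv ℝ (fun y : E => fAB A B ‖y‖) x‖
      = (Ioo A B).indicator (fun r => r⁻¹ / (log B - log A)) ‖x‖ := by
  rcases hxA.lt_or_gt with hinner | houter
  · have hconst : (fun y : E => fAB A B ‖y‖) =ᶠ[𝓝 x] fun _ => 1 :=
      (continuous_norm.tendsto x).eventually (fAB_eventuallyEq_one hinner)
    rw [hconst.fderiv_eq, fderiv_fun_const, indicator_of_notMem fun h => hinner.not_gt h.1]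
    simp
  have hx : x ≠ 0 := norm_pos_iff.1 (hA.trans houter)
  rcases hxB.lt_or_gt with hmid | hfar
  · have hmem : ‖x‖ ∈ Ioo A B := ⟨houter, hmid⟩
    rw [norm_fderiv_comp_norm hx (hasDerivAt_fAB_of_mem_Ioo hA hmem), indicator_of_mem hmem,
      abs_div, abs_inv, abs_norm, abs_sub_comm,
      abs_of_pos (sub_pos.2 (log_lt_log hA (houter.trans hmid)))]
  · rw [norm_fderiv_comp_norm hx (hasDerivAt_fAB_of_gt hAB hfar),
      indicator_of_notMem fun h => hfar.not_gt h.2, abs_zero]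

theorem integral_norm_fderiv_fAB_norm_rpow [FiniteDimensional ℝ E] [Nontrivial E]
    [MeasurableSpace E] [BorelSpace E] (μ : Measure E) [μ.IsAddHaarMeasure] {A B q : ℝ}
    (hA : 0 < A) (hAB : A ≤ B) (hq : 0 < q) (hqd : q ≠ finrank ℝ E) :
    ∫ x, ‖fderiv ℝ (fun y : E => fAB A B ‖y‖) x‖ ^ q ∂μ
      = finrank ℝ E * μ.real (ball 0 1) * ((B ^ ((finrank ℝ E : ℝ) - q)
          - A ^ ((finrank ℝ E : ℝ) - q)) / (finrank ℝ E - q) / (log B - log A) ^ q) := by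
  set G : ℝ → ℝ := (Ioo A B).indicator fun r => (r⁻¹ / (log B - log A)) ^ q
  have hspheres : μ (sphere 0 A ∪ sphere 0 B) = 0 :=
    measure_union_null (Measure.addHaar_sphere μ 0 A) (Measure.addHaar_sphere μ 0 B)
  have hae : (fun x => ‖fderiv ℝ (fun y : E => fAB A B ‖y‖) x‖ ^ q) =ᵐ[μ] fun x => G ‖x‖ := by
    filter_upwards [measure_eq_zero_iff_ae_notMem.1 hspheres] with x hx
    simp only [mem_union, mem_sphere_zero_iff_norm, not_or] at hx
    rw [norm_fderiv_fAB_norm hA hAB hx.1 hx.2]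
    exact (congrFun
      (indicator_comp_of_zero (g := fun t : ℝ => t ^ q) (zero_rpow hq.ne')) ‖x‖).symm
  have hradial : ∫ r in Ioi (0 : ℝ), r ^ (finrank ℝ E - 1) • G r
      = ∫ r in Ioo A B, r ^ (finrank ℝ E - 1) * (r⁻¹ / (log B - log A)) ^ q := by
    have hG : (fun r => r ^ (finrank ℝ E - 1) • G r) = (Ioo A B).indicator
        fun r => r ^ (finrank ℝ E - 1) * (r⁻¹ / (log B - log A)) ^ q :=
      funext fun r => (indicator_mul_right (Ioo A B) (fun r : ℝ => r ^ (finrank ℝ E - 1))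
        fun r => (r⁻¹ / (log B - log A)) ^ q).symm
    rw [hG, setIntegral_indicator measurableSet_Ioo,
      inter_eq_self_of_subset_right (Ioo_subset_Ioi_self.trans (Ioi_subset_Ioi hA.le))]
  have hL : 0 ≤ log B - log A := sub_nonneg.2 (log_le_log hA hAB)
  rw [integral_congr_ae hae, integral_fun_norm_addHaar, hradial,
    integral_Ioo_pow_mul_inv_div_rpow finrank_pos hA hAB hL hqd, nsmul_eq_mul, smul_eq_mul,
    mul_assoc]

end RadialFunction

lemma integral_norm_fderiv_etaTilde_rpow_le {ε α q : ℝ} (hε : 0 < ε) (hα : 1 ≤ α) (hq : 2 < q) :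
    ∫ x, ‖fderiv ℝ (etaTilde ε α) x‖ ^ q
      ≤ 2 * volume.real (ball (0 : EuclideanSpace ℝ (Fin 2)) 1) / (q - 2) * ε ^ (2 - q)
          / log α ^ q := by
  have hεα : ε ≤ ε * α := le_mul_of_one_le_right hε.le hα
  have hlog : log (ε * α) - log ε = log α := by
    rw [log_mul hε.ne' (by positivity)]; ring
  have hformula := integral_norm_fderiv_fAB_norm_rpow (q := q)
    (volume : Measure (EuclideanSpace ℝ (Fin 2))) hε hεα (by positivity)
    (by rw [finrank_euclideanSpace_fin]; norm_num; linarith)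
  rw [finrank_euclideanSpace_fin, Nat.cast_ofNat, hlog] at hformula
  have hswap : ((ε * α) ^ (2 - q) - ε ^ (2 - q)) / (2 - q)
      = (ε ^ (2 - q) - (ε * α) ^ (2 - q)) / (q - 2) := by
    rw [← neg_div_neg_eq, neg_sub, neg_sub]
  rw [show etaTilde ε α = fun y => fAB ε (ε * α) ‖y‖ from rfl, hformula, hswap]
  have hB : 0 ≤ (ε * α) ^ (2 - q) := by positivity
  have hq2 : 0 < q - 2 := by linarith
  have hLq : 0 ≤ log α ^ q := rpow_nonneg (log_nonneg hα) q
  calc _ = 2 * volume.real (ball (0 : EuclideanSpace ℝ (Fin 2)) 1) / (q - 2)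
        * (ε ^ (2 - q) - (ε * α) ^ (2 - q)) / log α ^ q := by ring
    _ ≤ _ := by gcongr; linarith

lemma mul_rpow_integral_norm_fderiv_etaTilde_le {ε α q : ℝ} (hε : 0 < ε) (hα : 1 < α)
    (hq : 2 < q) :
    ε * α * (∫ x, ‖fderiv ℝ (etaTilde ε α) x‖ ^ q) ^ (1 / q)
      ≤ (2 * volume.real (ball (0 : EuclideanSpace ℝ (Fin 2)) 1) / (q - 2)) ^ (1 / q)
          * (α / log α) * ε ^ (2 / q) := by
  set K := 2 * volume.real (ball (0 : EuclideanSpace ℝ (Fin 2)) 1) / (q - 2)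
  have hq0 : 0 < q := by linarith
  have hK : 0 ≤ K := div_nonneg (by positivity) (by linarith)
  have hL : 0 < log α := log_pos hα
  have hεpow : ε ^ (2 / q) = ε * ε ^ ((2 - q) / q) := by
    rw [show 2 / q = 1 + (2 - q) / q by field_simp; ring, rpow_add hε, rpow_one]
  calc ε * α * (∫ x, ‖fderiv ℝ (etaTilde ε α) x‖ ^ q) ^ (1 / q)
      ≤ ε * α * (K * ε ^ (2 - q) / log α ^ q) ^ (1 / q) := by
        have hI : 0 ≤ ∫ x, ‖fderiv ℝ (etaTilde ε α) x‖ ^ q :=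
          integral_nonneg fun x => by positivity
        gcongr
        exact integral_norm_fderiv_etaTilde_rpow_le hε hα.le hq
    _ = K ^ (1 / q) * (α / log α) * ε ^ (2 / q) := by
        rw [div_rpow (by positivity) (by positivity), mul_rpow hK (by positivity),
          ← rpow_mul hε.le, ← rpow_mul hL.le, mul_one_div_cancel hq0.ne', rpow_one, hεpow,
          mul_one_div]
        ring

/-- if `ε_n → 0⁺`, `α_n → +∞` with `α_n ≤ |log ε_n|`, then for every
`2 < q < ∞` one has `ε_n α_n ‖∇η̃_n‖_{L^q(ℝ²)} → 0`. -/
theorem stmt7 (ε α : ℕ → ℝ) (hεpos : ∀ n, 0 < ε n)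
    (hε0 : Tendsto ε atTop (nhds 0))
    (hα : Tendsto α atTop atTop)
    (hαlog : ∀ n, α n ≤ |Real.log (ε n)|)
    (q : ℝ) (hq : 2 < q) :
    Tendsto (fun n => ε n * α n *
        (∫ x : EuclideanSpace ℝ (Fin 2), ‖fderiv ℝ (etaTilde (ε n) (α n)) x‖ ^ q) ^ (1 / q))
      atTop (nhds 0) := by
  set C := (2 * volume.real (ball (0 : EuclideanSpace ℝ (Fin 2)) 1) / (q - 2)) ^ (1 / q)
  have hε : Tendsto ε atTop (𝓝[>] 0) := tendsto_nhdsWithin_iff.2 ⟨hε0, .of_forall hεpos⟩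
  have hlim : Tendsto (fun n => C * (|log (ε n)| * ε n ^ (2 / q))) atTop (𝓝 0) := by
    have h := ((tendsto_log_mul_rpow_nhdsGT_zero (r := 2 / q) (by positivity)).comp hε).abs
    simpa only [Function.comp_def, abs_mul, abs_of_pos (rpow_pos_of_pos (hεpos _) _), abs_zero,
      mul_zero] using h.const_mul C
  refine squeeze_zero' ?_ ?_ hlim
  · filter_upwards [hα.eventually_ge_atTop 0] with n hn
    have := hεpos n
    positivity
  · filter_upwards [hα.eventually_ge_atTop (exp 1)] with n hn
    have hα1 : 1 < α n := (one_lt_exp_iff.2 one_pos).trans_le hn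
    have hratio : α n / log (α n) ≤ |log (ε n)| :=
      (div_le_self (by linarith) ((le_log_iff_exp_le (by linarith)).2 hn)).trans (hαlog n)
    calc _ ≤ C * (α n / log (α n)) * ε n ^ (2 / q) :=
          mul_rpow_integral_norm_fderiv_etaTilde_le (hεpos n) hα1 hq
      _ ≤ C * (|log (ε n)| * ε n ^ (2 / q)) := by
          have := hεpos n
          rw [mul_assoc]
          gcongr
end

section
/- Let H be a Hilbert space, T > 0, and let (f_n) be a sequence of functions f_n : (0,T) → H with distributional derivative ∂_t f_n = g_n¹ + g_n², where ‖g_n¹‖_{L^p(0,T;H)} ≤ C for some p > 1 and C independent of n, and ‖g_n²‖_{L¹(0,T;H)} → 0 as n → ∞. Then each f_n has a continuous representative and the family (f_n) is equicontinuous on [0,T] with values in H. -/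
open MeasureTheory Filter Set

/-!
For `s ≤ t` the increment `f t - f s` is `∫ₛᵗ g¹ + ∫ₛᵗ g²`. Hölder's inequality against the
constant `1` bounds the first term by `‖g¹‖_{L^p} (t - s)^{1 - 1/p} ≤ C (t - s)^{1 - 1/p}`, uniformly
in `n`, and the second by `‖g²‖_{L¹}`, which tends to `0`; a modulus of continuity of the form
`C h^{1 - 1/p} + o(1)` as `n → ∞` is exactly equicontinuity for large `n`.
-/

section

variable {E : Type*} [NormedAddCommGroup E]

theorem intervalIntegral.integral_norm_le_Lp_mul_rpow_sub {g : ℝ → E} {p q a b : ℝ}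
    (hpq : p.HolderConjugate q) (hab : a ≤ b)
    (hg : AEStronglyMeasurable g (volume.restrict (Ioc a b)))
    (hgp : IntervalIntegrable (fun t => ‖g t‖ ^ p) volume a b) :
    ∫ t in a..b, ‖g t‖ ≤ (∫ t in a..b, ‖g t‖ ^ p) ^ (1 / p) * (b - a) ^ (1 / q) := by
  have hg_memLp : MemLp g (ENNReal.ofReal p) (volume.restrict (Ioc a b)) := by
    rw [← integrable_norm_rpow_iff hg (by simp [hpq.pos]) (by simp),
      ENNReal.toReal_ofReal hpq.nonneg]
    exact hgp.1
  have := integral_mul_le_Lp_mul_Lq_of_nonneg hpq (ae_of_all _ fun t => norm_nonneg (g t))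
    (ae_of_all _ fun _ => zero_le_one) hg_memLp.norm (memLp_const (1 : ℝ))
  simpa [intervalIntegral.integral_of_le hab, Real.volume_Ioc, sub_nonneg.2 hab] using this

section Primitive

variable [NormedSpace ℝ E] {f φ : ℝ → E} {a b : ℝ}

theorem sub_eq_integral_of_eq_add_integral (hφ : IntervalIntegrable φ volume a b)
    (hf : ∀ t ∈ Icc a b, f t = f a + ∫ u in a..t, φ u) {s t : ℝ} (hs : s ∈ Icc a b)
    (ht : t ∈ Icc a b) :
    f t - f s = ∫ u in s..t, φ u := by
  have hφ_to {x : ℝ} (hx : x ∈ Icc a b) : IntervalIntegrable φ volume a x :=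
    hφ.mono_set (uIcc_subset_uIcc left_mem_uIcc (Icc_subset_uIcc hx))
  rw [hf t ht, hf s hs, add_sub_add_left_eq_sub,
    intervalIntegral.integral_interval_sub_left (hφ_to ht) (hφ_to hs)]

theorem continuousOn_of_eq_add_integral (hφ : IntervalIntegrable φ volume a b)
    (hf : ∀ t ∈ Icc a b, f t = f a + ∫ u in a..t, φ u) :
    ContinuousOn f (Icc a b) :=
  ((continuousOn_const.add (intervalIntegral.continuousOn_primitive_interval' hφ
    left_mem_uIcc)).mono Icc_subset_uIcc).congr hf

theorem norm_sub_le_of_eq_add_integral_add {g₁ g₂ : ℝ → E} {p : ℝ} (hp : 1 < p)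
    (hg₁ : IntervalIntegrable g₁ volume a b) (hg₂ : IntervalIntegrable g₂ volume a b)
    (hg₁p : IntervalIntegrable (fun t => ‖g₁ t‖ ^ p) volume a b)
    (hf : ∀ t ∈ Icc a b, f t = f a + ∫ u in a..t, (g₁ u + g₂ u)) {s t : ℝ}
    (hs : s ∈ Icc a b) (ht : t ∈ Icc a b) :
    ‖f t - f s‖ ≤
      (∫ u in a..b, ‖g₁ u‖ ^ p) ^ (1 / p) * |s - t| ^ (1 - 1 / p) + ∫ u in a..b, ‖g₂ u‖ := by
  wlog hst : s ≤ t generalizing s t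
  · rw [norm_sub_rev, abs_sub_comm]
    exact this ht hs (le_of_not_ge hst)
  have hpq := Real.HolderConjugate.conjExponent hp
  have hexp : 1 - 1 / p = 1 / p.conjExponent := by rw [one_div, one_div, hpq.one_sub_inv]
  have hsub : uIcc s t ⊆ uIcc a b := uIcc_subset_uIcc (Icc_subset_uIcc hs) (Icc_subset_uIcc ht)
  rw [sub_eq_integral_of_eq_add_integral (hg₁.add hg₂) hf hs ht,
    intervalIntegral.integral_add (hg₁.mono_set hsub) (hg₂.mono_set hsub), abs_sub_comm,
    abs_of_nonneg (sub_nonneg.2 hst), hexp]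
  refine (norm_add_le _ _).trans (add_le_add ?_ ?_)
  · have hg₁_meas : AEStronglyMeasurable g₁ (volume.restrict (Ioc s t)) :=
      (hg₁.mono_set hsub).1.aestronglyMeasurable
    calc ‖∫ u in s..t, g₁ u‖
        ≤ ∫ u in s..t, ‖g₁ u‖ := intervalIntegral.norm_integral_le_integral_norm hst
      _ ≤ (∫ u in s..t, ‖g₁ u‖ ^ p) ^ (1 / p) * (t - s) ^ (1 / p.conjExponent) :=
        intervalIntegral.integral_norm_le_Lp_mul_rpow_sub hpq hst hg₁_meas (hg₁p.mono_set hsub)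
      _ ≤ (∫ u in a..b, ‖g₁ u‖ ^ p) ^ (1 / p) * (t - s) ^ (1 / p.conjExponent) := by
        gcongr
        · exact intervalIntegral.integral_nonneg hst fun u _ => by positivity
        · exact intervalIntegral.integral_mono_interval hs.1 hst ht.2
            (ae_of_all _ fun u => by positivity) hg₁p
  · exact (intervalIntegral.norm_integral_le_integral_norm hst).trans
      (intervalIntegral.integral_mono_interval hs.1 hst ht.2 (ae_of_all _ fun u => norm_nonneg _)
        hg₂.norm)

end Primitive

theorem exists_forall_norm_sub_le_of_le_mul_rpow_add {F : ℕ → ℝ → E} {S : Set ℝ}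
    {C α : ℝ} {ε : ℕ → ℝ} (hC : 0 < C) (hα : 0 < α) (hε : Tendsto ε atTop (nhds 0))
    (hF : ∀ n, ∀ s ∈ S, ∀ t ∈ S, ‖F n t - F n s‖ ≤ C * |s - t| ^ α + ε n) :
    ∀ δ > (0:ℝ), ∃ h > (0:ℝ), ∃ N : ℕ, ∀ n ≥ N,
      ∀ s ∈ S, ∀ t ∈ S, |s - t| ≤ h → ‖F n t - F n s‖ ≤ δ := by
  intro δ hδ
  obtain ⟨N, hN⟩ := eventually_atTop.1 (hε.eventually (ge_mem_nhds (half_pos hδ)))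
  refine ⟨(δ / (2 * C)) ^ α⁻¹, by positivity, N, fun n hn s hs t ht hst => ?_⟩
  have hmodulus : C * |s - t| ^ α ≤ δ / 2 :=
    calc C * |s - t| ^ α ≤ C * ((δ / (2 * C)) ^ α⁻¹) ^ α := by gcongr
      _ = δ / 2 := by
        rw [← Real.rpow_mul (by positivity), inv_mul_cancel₀ hα.ne', Real.rpow_one]
        field_simp
  linarith [hF n s hs t ht, hN n hn]

end

theorem stmt11_general {H : Type*} [NormedAddCommGroup H] [InnerProductSpace ℝ H]
    (T : ℝ)
    (f : ℕ → ℝ → H) (g1 g2 : ℕ → ℝ → H)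
    (p C : ℝ) (hp : 1 < p) (hC : 0 < C)
    (hint1 : ∀ n, IntervalIntegrable (g1 n) volume 0 T)
    (hint2 : ∀ n, IntervalIntegrable (g2 n) volume 0 T)
    (hintp : ∀ n, IntervalIntegrable (fun t => ‖g1 n t‖ ^ p) volume 0 T)
    (hbound : ∀ n, (∫ t in (0:ℝ)..T, ‖g1 n t‖ ^ p) ^ (1 / p) ≤ C)
    (hg2 : Tendsto (fun n => ∫ t in (0:ℝ)..T, ‖g2 n t‖) atTop (nhds 0))
    (hderiv : ∀ n, ∀ t ∈ Set.Icc (0:ℝ) T,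
      f n t = f n 0 + ∫ s in (0:ℝ)..t, (g1 n s + g2 n s)) :
    (∀ n, ContinuousOn (f n) (Set.Icc 0 T)) ∧
      ∀ δ > (0:ℝ), ∃ h > (0:ℝ), ∃ N : ℕ, ∀ n ≥ N,
        ∀ s ∈ Set.Icc (0:ℝ) T, ∀ t ∈ Set.Icc (0:ℝ) T,
          |s - t| ≤ h → ‖f n t - f n s‖ ≤ δ := by
  have hα : 0 < 1 - 1 / p := sub_pos.2 ((div_lt_one (by linarith)).2 hp)
  refine ⟨fun n => continuousOn_of_eq_add_integral ((hint1 n).add (hint2 n)) (hderiv n),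
    exists_forall_norm_sub_le_of_le_mul_rpow_add hC hα hg2 fun n s hs t ht => ?_⟩
  refine (norm_sub_le_of_eq_add_integral_add hp (hint1 n) (hint2 n) (hintp n) (hderiv n) hs
    ht).trans ?_
  gcongr
  exact hbound n

/-- if `∂_t f_n = g_n¹ + g_n²` with `g_n¹` bounded in `L^p(0,T;H)`, `p > 1`,
and `g_n² → 0` in `L¹(0,T;H)`, then the `f_n` are continuous and equicontinuous on `[0,T]`. -/
theorem stmt11 {H : Type*} [NormedAddCommGroup H] [InnerProductSpace ℝ H] [CompleteSpace H]
    (T : ℝ) (hT : 0 < T)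
    (f : ℕ → ℝ → H) (g1 g2 : ℕ → ℝ → H)
    (p C : ℝ) (hp : 1 < p) (hC : 0 < C)
    (hint1 : ∀ n, IntervalIntegrable (g1 n) volume 0 T)
    (hint2 : ∀ n, IntervalIntegrable (g2 n) volume 0 T)
    (hintp : ∀ n, IntervalIntegrable (fun t => ‖g1 n t‖ ^ p) volume 0 T)
    (hbound : ∀ n, (∫ t in (0:ℝ)..T, ‖g1 n t‖ ^ p) ^ (1 / p) ≤ C)
    (hg2 : Tendsto (fun n => ∫ t in (0:ℝ)..T, ‖g2 n t‖) atTop (nhds 0))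
    (hderiv : ∀ n, ∀ t ∈ Set.Icc (0:ℝ) T,
      f n t = f n 0 + ∫ s in (0:ℝ)..t, (g1 n s + g2 n s)) :
    (∀ n, ContinuousOn (f n) (Set.Icc 0 T)) ∧
      ∀ δ > (0:ℝ), ∃ h > (0:ℝ), ∃ N : ℕ, ∀ n ≥ N,
        ∀ s ∈ Set.Icc (0:ℝ) T, ∀ t ∈ Set.Icc (0:ℝ) T,
          |s - t| ≤ h → ‖f n t - f n s‖ ≤ δ :=
  stmt11_general T f g1 g2 p C hp hC hint1 hint2 hintp hbound hg2 hderiv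
end
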